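/- arXiv:1905.07932 — 5 statements merged into one kernel-verified Lean document; each statement's English description precedes it below -/
import Mathlib

section
/- Let e(t) = exp(2πit), and for j = 0, 1, …, 7 set P_j = e(j/8)·P₀ and Q_j = e(j/8)·Q₀, where P₀ = [1, 1.3] × [−1.5, 1.5] and Q₀ = [0, 2] × [−0.1, 0.1] are regarded as subsets of ℂ. Then every continuous curve γ : [0,1] → ℂ with |γ(0)| = 1, |γ(1)| = 2 and 1 ≤ |γ(t)| ≤ 2 for all t contains a horizontal crossing of some P_j or a vertical crossing of some Q_j; that is, there exist 0 ≤ s ≤ t ≤ 1 and j ∈ {0,…,7} such that either γ([s,t]) ⊆ P_j and e(−j/8)γ(s), e(−j/8)γ(t) lie on the two opposite sides {w : Re w = 1} ∩ P₀ and {w : Re w = 1.3} ∩ P₀ of P₀ (one endpoint on each), or γ([s,t]) ⊆ Q_j and e(−j/8)γ(s), e(−j/8)γ(t) lie on the two opposite sides {w : Im w = −0.1} ∩ Q₀ and {w : Im w = 0.1} ∩ Q₀ of Q₀ (one endpoint on each). -/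
/-!
Write `z_k = e(-k/8)·γ` for `k ∈ ℤ/8` and let `H k` say that `z_k` stays strictly above the
line `Im = -0.1`. Suppose `γ` crosses no `Q_j` vertically. If both `H k` and `H (k + 4)` failed,
`Im z_k` would pass from `≤ -0.1` to `≥ 0.1` (or back); on a minimal subinterval where it runs
from one value `±0.1` to the other, `|z_k| ≥ 1` keeps `z_k` off the imaginary axis, so this is a
vertical crossing of `Q_k` or, after the half-turn `z_{k+4} = -z_k`, of `Q_{k+4}`. Hence
`H k ∨ H (k + 4)` for all `k`, and since `5 + 4 = 1` in `ℤ/8` this forces `H k ∧ H (k + 5)` for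
some `k`. Then `z_k` lies in the wedge `-0.1 < Im z < Re z + 0.15`, where `|z| = 2` implies
`Re z > 1.3`, while `Re z_k(0) ≤ |γ 0| = 1`; a minimal subinterval on which `Re z_k` runs from
`1` to `1.3` is a horizontal crossing of `P_k`.
-/

open Set Complex

noncomputable section

/-- `e(t) = exp(2πit)`. -/
def eRot (t : ℝ) : ℂ := Complex.exp (2 * Real.pi * t * Complex.I)

/-- The rectangle `P₀ = [1, 1.3] × [−1.5, 1.5]`, as a subset of `ℂ`. -/
def Prect : Set ℂ := {w | 1 ≤ w.re ∧ w.re ≤ 1.3 ∧ -1.5 ≤ w.im ∧ w.im ≤ 1.5}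

/-- The rectangle `Q₀ = [0, 2] × [−0.1, 0.1]`, as a subset of `ℂ`. -/
def Qrect : Set ℂ := {w | 0 ≤ w.re ∧ w.re ≤ 2 ∧ -0.1 ≤ w.im ∧ w.im ≤ 0.1}

theorem ContinuousOn.exists_eq_forall_le_before {F : ℝ → ℝ} {a b q : ℝ} (hab : a ≤ b)
    (hF : ContinuousOn F (Icc a b)) (ha : F a ≤ q) (hb : q ≤ F b) :
    ∃ t ∈ Icc a b, F t = q ∧ ∀ u ∈ Icc a t, F u ≤ q := by
  set T := Icc a b ∩ F ⁻¹' Ici q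
  have hT : IsClosed T := hF.preimage_isClosed_of_isClosed isClosed_Icc isClosed_Ici
  have hTbdd : BddBelow T := ⟨a, fun x hx => hx.1.1⟩
  have htT : sInf T ∈ T := hT.csInf_mem ⟨b, ⟨hab, le_rfl⟩, hb⟩ hTbdd
  obtain ⟨⟨hat, htb⟩, hqt⟩ := htT
  have hfirst : ∀ u ∈ Icc a (sInf T), q ≤ F u → u = sInf T := fun u hu hqu =>
    le_antisymm hu.2 (csInf_le hTbdd ⟨⟨hu.1, hu.2.trans htb⟩, hqu⟩)
  obtain ⟨v, hv, hFv⟩ := intermediate_value_Icc hat (hF.mono (Icc_subset_Icc le_rfl htb))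
    ⟨ha, hqt⟩
  have htq : F (sInf T) = q := hfirst v hv hFv.ge ▸ hFv
  refine ⟨sInf T, ⟨hat, htb⟩, htq, fun u hu => ?_⟩
  by_contra! hqu
  rw [hfirst u hu hqu.le, htq] at hqu
  exact lt_irrefl q hqu

theorem ContinuousOn.exists_eq_forall_ge_after {F : ℝ → ℝ} {a b p : ℝ} (hab : a ≤ b)
    (hF : ContinuousOn F (Icc a b)) (ha : F a ≤ p) (hb : p ≤ F b) :
    ∃ s ∈ Icc a b, F s = p ∧ ∀ u ∈ Icc s b, p ≤ F u := by
  have hG : ContinuousOn (fun u => -F (-u)) (Icc (-b) (-a)) :=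
    (hF.comp continuousOn_neg fun u hu => ⟨le_neg.2 hu.2, neg_le.2 hu.1⟩).neg
  obtain ⟨t, ht, hGt, hG_le⟩ := hG.exists_eq_forall_le_before (q := -p) (neg_le_neg hab)
    (by simpa using hb) (by simpa using ha)
  refine ⟨-t, ⟨by linarith [ht.2], by linarith [ht.1]⟩, by linarith, fun u hu => ?_⟩
  have := hG_le (-u) ⟨by linarith [hu.2], by linarith [hu.1]⟩
  simp only [neg_neg] at this
  linarith

theorem ContinuousOn.exists_Icc_crossing {F : ℝ → ℝ} {a b p q : ℝ} (hab : a ≤ b)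
    (hF : ContinuousOn F (Icc a b)) (hpq : p ≤ q) (ha : F a ≤ p) (hb : q ≤ F b) :
    ∃ s t, a ≤ s ∧ s ≤ t ∧ t ≤ b ∧ F s = p ∧ F t = q ∧ ∀ u ∈ Icc s t, p ≤ F u ∧ F u ≤ q := by
  obtain ⟨t, ⟨hat, htb⟩, hFt, hle⟩ := hF.exists_eq_forall_le_before hab (ha.trans hpq) hb
  obtain ⟨s, ⟨has, hst⟩, hFs, hge⟩ :=
    (hF.mono (Icc_subset_Icc le_rfl htb)).exists_eq_forall_ge_after hat ha (hFt ▸ hpq)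
  exact ⟨s, t, has, hst, htb, hFs, hFt, fun u hu => ⟨hge u hu, hle u ⟨has.trans hu.1, hu.2⟩⟩⟩

theorem IsPreconnected.forall_pos_or_forall_neg {S : Set ℝ} {F : ℝ → ℝ} (hS : IsPreconnected S)
    (hF : ContinuousOn F S) (hne : ∀ u ∈ S, F u ≠ 0) :
    (∀ u ∈ S, 0 < F u) ∨ (∀ u ∈ S, F u < 0) := by
  by_contra! h
  obtain ⟨⟨a, ha, hFa⟩, ⟨b, hb, hFb⟩⟩ := h
  obtain ⟨c, hc, hFc⟩ := hS.intermediate_value ha hb hF ⟨hFa, hFb⟩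
  exact hne c hc hFc

theorem eRot_add (s t : ℝ) : eRot (s + t) = eRot s * eRot t := by
  rw [eRot, eRot, eRot, ← Complex.exp_add]
  congr 1
  push_cast
  ring

theorem eRot_intCast (n : ℤ) : eRot n = 1 := by
  rw [eRot, ← Complex.exp_int_mul_two_pi_mul_I n]
  push_cast
  ring_nf

theorem norm_eRot (t : ℝ) : ‖eRot t‖ = 1 := by
  rw [eRot, Complex.norm_exp]
  simp

theorem eRot_mul_eRot_neg (t : ℝ) : eRot t * eRot (-t) = 1 := by
  rw [← eRot_add, add_neg_cancel, ← Int.cast_zero, eRot_intCast]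

def eighthRoot (k : ZMod 8) : ℂ := eRot (-(k.val : ℝ) / 8)

theorem norm_eighthRoot (k : ZMod 8) : ‖eighthRoot k‖ = 1 := norm_eRot _

theorem eighthRoot_add (k l : ZMod 8) : eighthRoot (k + l) = eighthRoot k * eighthRoot l := by
  have hval : -((k + l).val : ℝ) / 8 =
      (-(k.val : ℝ) / 8 + -(l.val : ℝ) / 8) + (((k.val + l.val) / 8 : ℕ) : ℤ) := by
    have hdiv : (((k.val + l.val) % 8 : ℕ) : ℝ) + 8 * ((k.val + l.val) / 8 : ℕ) =
        k.val + l.val := by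
      exact_mod_cast Nat.mod_add_div (k.val + l.val) 8
    rw [ZMod.val_add, Int.cast_natCast]
    linarith
  rw [eighthRoot, hval, eRot_add, eRot_intCast, mul_one, eRot_add, eighthRoot, eighthRoot]

theorem eighthRoot_four : eighthRoot 4 = -1 := by
  have : (2 * Real.pi * ((-((4 : ZMod 8).val : ℝ) / 8 : ℝ) : ℂ)) * I = -(Real.pi * I) := by
    rw [show (4 : ZMod 8).val = 4 from rfl]; push_cast; ring
  rw [eighthRoot, eRot, this, Complex.exp_neg, Complex.exp_pi_mul_I]
  norm_num

theorem eighthRoot_one : eighthRoot 1 = (Real.sqrt 2 / 2 : ℝ) - (Real.sqrt 2 / 2 : ℝ) * I := by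
  have : (2 * Real.pi * ((-((1 : ZMod 8).val : ℝ) / 8 : ℝ) : ℂ)) * I =
      (-(Real.pi / 4) : ℝ) * I := by
    rw [show (1 : ZMod 8).val = 1 from rfl]; push_cast; ring
  rw [eighthRoot, eRot, this, Complex.exp_mul_I, ← Complex.ofReal_cos, ← Complex.ofReal_sin,
    Real.cos_neg, Real.sin_neg, Real.cos_pi_div_four, Real.sin_pi_div_four]
  push_cast
  ring

theorem eighthRoot_add_four (k : ZMod 8) : eighthRoot (k + 4) = -eighthRoot k := by
  rw [eighthRoot_add, eighthRoot_four, mul_neg_one]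

theorem im_eighthRoot_five_mul (w : ℂ) :
    (eighthRoot 5 * w).im = Real.sqrt 2 / 2 * (w.re - w.im) := by
  rw [show (5 : ZMod 8) = 1 + 4 from rfl, eighthRoot_add_four, eighthRoot_one]
  simp only [neg_mul, neg_im, mul_im, sub_re, sub_im, mul_re, ofReal_re, ofReal_im, I_re, I_im]
  ring

theorem im_lt_re_add_of_neg_lt_im_eighthRoot_five_mul {w : ℂ}
    (h : -0.1 < (eighthRoot 5 * w).im) : w.im < w.re + 0.15 := by
  rw [im_eighthRoot_five_mul] at h
  have hsqrt : (4 / 3 : ℝ) ≤ Real.sqrt 2 := Real.le_sqrt_of_sq_le (by norm_num)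
  by_contra! hw
  nlinarith [mul_le_mul_of_nonneg_right hsqrt (show 0 ≤ w.im - w.re - 0.15 by linarith)]

theorem exists_and_add_five_of_forall_or_add_four (H : ZMod 8 → Prop)
    (h : ∀ k, H k ∨ H (k + 4)) : ∃ k, H k ∧ H (k + 5) := by
  by_contra! hno
  have hsucc (k : ZMod 8) (hk : H k) : H (k + 1) := by
    have := (h (k + 5)).resolve_left (hno k hk)
    rwa [add_assoc, show (5 + 4 : ZMod 8) = 1 from rfl] at this
  have hadd_five (k : ZMod 8) (hk : H k) : H (k + 5) := by
    have := hsucc _ (hsucc _ (hsucc _ (hsucc _ (hsucc _ hk))))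
    rwa [show k + 1 + 1 + 1 + 1 + 1 = k + 5 by ring] at this
  obtain ⟨m, hm⟩ : ∃ m, H m := (h 0).elim (⟨0, ·⟩) (⟨4, ·⟩)
  exact hno m hm (hadd_five m hm)

def HasHorizontalCrossingP (z : ℝ → ℂ) : Prop :=
  ∃ s t : ℝ, 0 ≤ s ∧ s ≤ t ∧ t ≤ 1 ∧ (∀ u ∈ Icc s t, z u ∈ Prect) ∧
    ((z s).re = 1 ∧ (z t).re = 1.3 ∨ (z s).re = 1.3 ∧ (z t).re = 1)

def HasVerticalCrossingQ (z : ℝ → ℂ) : Prop :=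
  ∃ s t : ℝ, 0 ≤ s ∧ s ≤ t ∧ t ≤ 1 ∧ (∀ u ∈ Icc s t, z u ∈ Qrect) ∧
    ((z s).im = -0.1 ∧ (z t).im = 0.1 ∨ (z s).im = 0.1 ∧ (z t).im = -0.1)

section Crossings

variable {z : ℝ → ℂ}

theorem one_point_three_lt_re_of_norm_eq_two {w : ℂ} (hw : ‖w‖ = 2) (hlo : -0.1 < w.im)
    (hhi : w.im < w.re + 0.15) : 1.3 < w.re := by
  have hsq := Complex.sq_norm w
  rw [hw, Complex.normSq_apply] at hsq
  by_contra! hre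
  nlinarith [mul_nonneg (sub_nonneg.2 hre) (show 0 ≤ w.re + 0.25 by linarith),
    mul_pos (show 0 < 1.45 - w.im by linarith) (show 0 < w.im + 0.1 by linarith)]

theorem hasHorizontalCrossingP_of_wedge (hz : ContinuousOn z (Icc 0 1)) (h0 : ‖z 0‖ = 1)
    (h1 : ‖z 1‖ = 2) (hwedge : ∀ u ∈ Icc 0 1, -0.1 < (z u).im ∧ (z u).im < (z u).re + 0.15) :
    HasHorizontalCrossingP z := by
  have hre0 : (z 0).re ≤ 1 := h0 ▸ re_le_norm _
  have hre1 : 1.3 ≤ (z 1).re :=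
    (one_point_three_lt_re_of_norm_eq_two h1 (hwedge 1 ⟨zero_le_one, le_rfl⟩).1
      (hwedge 1 ⟨zero_le_one, le_rfl⟩).2).le
  have hre : ContinuousOn (fun u => (z u).re) (Icc 0 1) := continuous_re.comp_continuousOn hz
  obtain ⟨s, t, hs, hst, ht, hzs, hzt, hmid⟩ :=
    hre.exists_Icc_crossing zero_le_one (by norm_num) hre0 hre1
  refine ⟨s, t, hs, hst, ht, fun u hu => ?_, Or.inl ⟨hzs, hzt⟩⟩
  obtain ⟨hlo, hhi⟩ := hwedge u ⟨hs.trans hu.1, hu.2.trans ht⟩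
  obtain ⟨hre_lo, hre_hi⟩ := hmid u hu
  exact ⟨hre_lo, hre_hi, by linarith, by linarith⟩

theorem hasVerticalCrossingQ_or_neg_of_le (hz : ContinuousOn z (Icc 0 1))
    (hnorm : ∀ u ∈ Icc 0 1, 1 ≤ ‖z u‖ ∧ ‖z u‖ ≤ 2) {a b : ℝ} (ha : 0 ≤ a) (hab : a ≤ b)
    (hb : b ≤ 1) (hza : (z a).im ≤ -0.1) (hzb : 0.1 ≤ (z b).im) :
    HasVerticalCrossingQ z ∨ HasVerticalCrossingQ (-z) := by
  have him : ContinuousOn (fun u => (z u).im) (Icc a b) :=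
    continuous_im.comp_continuousOn (hz.mono (Icc_subset_Icc ha hb))
  obtain ⟨s, t, has, hst, htb, hzs, hzt, hmid⟩ :=
    him.exists_Icc_crossing hab (by norm_num) hza hzb
  have hsub : Icc s t ⊆ Icc 0 1 := Icc_subset_Icc (ha.trans has) (htb.trans hb)
  have hre : ∀ u ∈ Icc s t, (z u).re ≠ 0 := fun u hu hre => by
    have := norm_le_abs_re_add_abs_im (z u)
    rw [hre, abs_zero, zero_add] at this
    linarith [abs_le.2 (hmid u hu), (hnorm u (hsub hu)).1]
  have hre_cont : ContinuousOn (fun u => (z u).re) (Icc s t) :=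
    continuous_re.comp_continuousOn (hz.mono hsub)
  rcases isPreconnected_Icc.forall_pos_or_forall_neg hre_cont hre with hpos | hneg
  · refine .inl ⟨s, t, ha.trans has, hst, htb.trans hb, fun u hu => ?_, .inl ⟨hzs, hzt⟩⟩
    exact ⟨(hpos u hu).le, (re_le_norm _).trans (hnorm u (hsub hu)).2, (hmid u hu).1, (hmid u hu).2⟩
  · refine .inr ⟨s, t, ha.trans has, hst, htb.trans hb, fun u hu => ?_,
      .inr ⟨by simp [hzs], by simp [hzt]⟩⟩
    show 0 ≤ (-z u).re ∧ (-z u).re ≤ 2 ∧ -0.1 ≤ (-z u).im ∧ (-z u).im ≤ 0.1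
    rw [neg_re, neg_im]
    refine ⟨(neg_pos.2 (hneg u hu)).le, ?_, by linarith [hmid u hu], by linarith [hmid u hu]⟩
    linarith [neg_le_abs (z u).re, abs_re_le_norm (z u), (hnorm u (hsub hu)).2]

theorem hasVerticalCrossingQ_or_neg (hz : ContinuousOn z (Icc 0 1))
    (hnorm : ∀ u ∈ Icc 0 1, 1 ≤ ‖z u‖ ∧ ‖z u‖ ≤ 2) {a b : ℝ} (ha : a ∈ Icc 0 1)
    (hb : b ∈ Icc 0 1) (hza : (z a).im ≤ -0.1) (hzb : 0.1 ≤ (z b).im) :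
    HasVerticalCrossingQ z ∨ HasVerticalCrossingQ (-z) := by
  rcases le_total a b with hab | hba
  · exact hasVerticalCrossingQ_or_neg_of_le hz hnorm ha.1 hab hb.2 hza hzb
  · have := hasVerticalCrossingQ_or_neg_of_le (z := -z) hz.neg (by simpa using hnorm) hb.1 hba
      ha.2 (by simpa using neg_le_neg hzb) (by simpa using neg_le_neg hza)
    rwa [neg_neg, or_comm] at this

theorem forall_neg_one_tenth_lt_im_or_hasVerticalCrossingQ (hz : ContinuousOn z (Icc 0 1))
    (hnorm : ∀ u ∈ Icc 0 1, 1 ≤ ‖z u‖ ∧ ‖z u‖ ≤ 2) :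
    (∀ u ∈ Icc 0 1, -0.1 < (z u).im) ∨ (∀ u ∈ Icc 0 1, -0.1 < ((-z) u).im) ∨
      HasVerticalCrossingQ z ∨ HasVerticalCrossingQ (-z) := by
  by_contra! h
  obtain ⟨⟨a, ha, hza⟩, ⟨b, hb, hzb⟩, hQ, hQneg⟩ := h
  rw [Pi.neg_apply, neg_im] at hzb
  exact (hasVerticalCrossingQ_or_neg hz hnorm ha hb hza (by linarith)).elim hQ hQneg

end Crossings

theorem exists_crossing_eighthRoot_mul {γ : ℝ → ℂ} (hγ : ContinuousOn γ (Icc 0 1))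
    (h0 : ‖γ 0‖ = 1) (h1 : ‖γ 1‖ = 2) (hin : ∀ t ∈ Icc (0 : ℝ) 1, 1 ≤ ‖γ t‖ ∧ ‖γ t‖ ≤ 2) :
    ∃ k : ZMod 8, HasHorizontalCrossingP (fun u => eighthRoot k * γ u) ∨
      HasVerticalCrossingQ (fun u => eighthRoot k * γ u) := by
  by_contra! hno
  set z : ZMod 8 → ℝ → ℂ := fun k u => eighthRoot k * γ u
  have hz (k : ZMod 8) : ContinuousOn (z k) (Icc 0 1) := continuousOn_const.mul hγ
  have hnorm (k : ZMod 8) (u : ℝ) : ‖z k u‖ = ‖γ u‖ := by simp [z, norm_eighthRoot]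
  have hneg (k : ZMod 8) : -z k = z (k + 4) := by
    funext u; simp [z, eighthRoot_add_four]
  set H : ZMod 8 → Prop := fun k => ∀ u ∈ Icc 0 1, -0.1 < (z k u).im
  have hsep (k : ZMod 8) : H k ∨ H (k + 4) := by
    rcases forall_neg_one_tenth_lt_im_or_hasVerticalCrossingQ (hz k) (by simpa [hnorm] using hin)
      with h | h | h | h
    · exact .inl h
    · exact .inr (by rwa [hneg] at h)
    · exact absurd h (hno k).2
    · exact absurd (by rwa [hneg] at h) (hno (k + 4)).2
  obtain ⟨k, hk, hk5⟩ := exists_and_add_five_of_forall_or_add_four H hsep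
  refine (hno k).1 (hasHorizontalCrossingP_of_wedge (hz k) (by rwa [hnorm]) (by rwa [hnorm])
    fun u hu => ⟨hk u hu, ?_⟩)
  apply im_lt_re_add_of_neg_lt_im_eighthRoot_five_mul
  simpa only [z, ← mul_assoc, ← eighthRoot_add, add_comm] using hk5 u hu

theorem image_subset_image_mul_of_forall_mul_mem {c d : ℂ} (hcd : c * d = 1) {f : ℝ → ℂ}
    {S : Set ℝ} {E : Set ℂ} (h : ∀ u ∈ S, d * f u ∈ E) : f '' S ⊆ (fun w => c * w) '' E := by
  rintro _ ⟨u, hu, rfl⟩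
  exact ⟨d * f u, h u hu, show c * (d * f u) = f u by rw [← mul_assoc, hcd, one_mul]⟩

/-- Every continuous curve in the closed annulus `{1 ≤ |z| ≤ 2}` connecting the
two boundary circles contains a horizontal crossing of some `P_j = e(j/8)·P₀` or a vertical
crossing of some `Q_j = e(j/8)·Q₀`, `j = 0, 1, …, 7`. -/
theorem crossing_of_annulus_crosses_a_rectangle
    (γ : ℝ → ℂ) (hcont : ContinuousOn γ (Set.Icc 0 1))
    (h0 : ‖γ 0‖ = 1) (h1 : ‖γ 1‖ = 2)
    (hin : ∀ t ∈ Set.Icc (0:ℝ) 1, 1 ≤ ‖γ t‖ ∧ ‖γ t‖ ≤ 2) :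
    ∃ s t : ℝ, 0 ≤ s ∧ s ≤ t ∧ t ≤ 1 ∧ ∃ j : ℕ, j ≤ 7 ∧
      ((γ '' Set.Icc s t ⊆ (fun w => eRot (j/8) * w) '' Prect ∧
        eRot (-(j:ℝ)/8) * γ s ∈ Prect ∧ eRot (-(j:ℝ)/8) * γ t ∈ Prect ∧
        (((eRot (-(j:ℝ)/8) * γ s).re = 1 ∧ (eRot (-(j:ℝ)/8) * γ t).re = 1.3) ∨
         ((eRot (-(j:ℝ)/8) * γ s).re = 1.3 ∧ (eRot (-(j:ℝ)/8) * γ t).re = 1))) ∨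
       (γ '' Set.Icc s t ⊆ (fun w => eRot (j/8) * w) '' Qrect ∧
        eRot (-(j:ℝ)/8) * γ s ∈ Qrect ∧ eRot (-(j:ℝ)/8) * γ t ∈ Qrect ∧
        (((eRot (-(j:ℝ)/8) * γ s).im = -0.1 ∧ (eRot (-(j:ℝ)/8) * γ t).im = 0.1) ∨
         ((eRot (-(j:ℝ)/8) * γ s).im = 0.1 ∧ (eRot (-(j:ℝ)/8) * γ t).im = -0.1)))) := by
  obtain ⟨k, hk⟩ := exists_crossing_eighthRoot_mul hcont h0 h1 hin
  have hk_inv : eRot (k.val / 8) * eighthRoot k = 1 := by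
    rw [eighthRoot, neg_div]
    exact eRot_mul_eRot_neg _
  have hrot {E : Set ℂ} {s t : ℝ} (h : ∀ u ∈ Icc s t, eighthRoot k * γ u ∈ E) :
      γ '' Icc s t ⊆ (fun w => eRot (k.val / 8) * w) '' E :=
    image_subset_image_mul_of_forall_mul_mem hk_inv h
  have hk7 : k.val ≤ 7 := Nat.le_of_lt_succ k.val_lt
  rcases hk with ⟨s, t, hs, hst, ht, hmem, hends⟩ | ⟨s, t, hs, hst, ht, hmem, hends⟩
  · exact ⟨s, t, hs, hst, ht, k.val, hk7,
      .inl ⟨hrot hmem, hmem s ⟨le_rfl, hst⟩, hmem t ⟨hst, le_rfl⟩, hends⟩⟩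
  · exact ⟨s, t, hs, hst, ht, k.val, hk7,
      .inr ⟨hrot hmem, hmem s ⟨le_rfl, hst⟩, hmem t ⟨hst, le_rfl⟩, hends⟩⟩

end
end

section
/- There exists a universal constant r₀ ∈ (0, 1/2) with the following property. For every r ∈ (0, r₀) and every integer N ≥ 1, colour the vertices of ℤ² independently at random, each vertex yellow with probability r and blue with probability 1 − r. Then with probability at least 1 − 1/N², for every pair of points x, y ∈ ([−N, N] × [−N, N]) ∩ ℤ² with Euclidean distance |x − y| ≥ log N, one has (9/10) · d_{ℤ²}(x, y) ≤ d_chem(x, y) ≤ d_{ℤ²}(x, y), where both distances are computed using only lattice paths all of whose vertices lie in [−N, N] × [−N, N]. -/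
open MeasureTheory

noncomputable section

/-- `p 0, p 1, …, p L` is a lattice path in `ℤ²`: consecutive points differ by a unit step. -/
def IsLatticePath (p : ℕ → ℤ × ℤ) (L : ℕ) : Prop :=
  ∀ i < L, ((p (i+1)).1 - (p i).1).natAbs + ((p (i+1)).2 - (p i).2).natAbs = 1

/-- The point `v ∈ ℤ²` lies in the box `[−N, N] × [−N, N]`. -/
def InBox (N : ℕ) (v : ℤ × ℤ) : Prop := |v.1| ≤ (N : ℤ) ∧ |v.2| ≤ (N : ℤ)

/-- The combinatorial distance between `x, y ∈ ℤ²`, computed using only lattice paths all of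
whose vertices lie in `[−N, N] × [−N, N]`. -/
def dZ (N : ℕ) (x y : ℤ × ℤ) : ℕ :=
  sInf {L | ∃ p : ℕ → ℤ × ℤ, IsLatticePath p L ∧ p 0 = x ∧ p L = y ∧ ∀ i ≤ L, InBox N (p i)}

/-- The chemical distance between `x, y ∈ ℤ²` for the colouring `c` (`true` = yellow,
`false` = blue): the minimal number of blue vertices among `x₁, …, x_L` over lattice paths
`x = x₀, …, x_L = y` all of whose vertices lie in `[−N, N] × [−N, N]`. -/
def dChem (N : ℕ) (c : ℤ × ℤ → Bool) (x y : ℤ × ℤ) : ℕ :=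
  sInf {n | ∃ (L : ℕ) (p : ℕ → ℤ × ℤ), IsLatticePath p L ∧ p 0 = x ∧ p L = y ∧
    (∀ i ≤ L, InBox N (p i)) ∧
    n = ((Finset.Icc 1 L).filter fun i => c (p i) = false).card}

/-- The Euclidean distance between two points of `ℤ²`. -/
def euclDist (x y : ℤ × ℤ) : ℝ :=
  Real.sqrt (((x.1 - y.1 : ℤ) : ℝ)^2 + ((x.2 - y.2 : ℤ) : ℝ)^2)

/-!
If the comparison fails for `x, y` with `|x - y| ≥ log N`, erasing the loops of an optimal chemical
path from `x` to `y` gives a self-avoiding path of length `ℓ ≥ d_{ℤ²}(x, y) ≥ log N` more than a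
tenth of whose vertices are yellow. A self-avoiding path is determined by its starting point in the
box and its `ℓ` unit steps, and a choice of `⌊ℓ/10⌋ + 1` of its vertices is all yellow with
probability `r ^ (⌊ℓ/10⌋ + 1)`, so the union bound gives probability at most
`(2N+1)² 4^ℓ 2^ℓ r^(⌊ℓ/10⌋+1) ≤ (2N+1)² e^(-32ℓ)` for `r ≤ e^(-400)`. Summing over `ℓ ≥ log N`
gives at most `1/N²`.
-/

open Finset
open scoped ENNReal

def colourCount (c : ℤ × ℤ → Bool) (b : Bool) (p : ℕ → ℤ × ℤ) (L : ℕ) : ℕ :=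
  #{i ∈ Icc 1 L | c (p i) = b}

lemma colourCount_le (c : ℤ × ℤ → Bool) (b : Bool) (p : ℕ → ℤ × ℤ) (L : ℕ) :
    colourCount c b p L ≤ L :=
  (card_filter_le _ _).trans (by simp)

lemma colourCount_true_add_colourCount_false (c : ℤ × ℤ → Bool) (p : ℕ → ℤ × ℤ) (L : ℕ) :
    colourCount c true p L + colourCount c false p L = L := by
  have := card_filter_add_card_filter_not (s := Icc 1 L) (p := fun i => c (p i) = true)
  simpa [colourCount] using this

namespace IsLatticePath

variable {p : ℕ → ℤ × ℤ} {L : ℕ}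

lemma natAbs_add_natAbs_le (hp : IsLatticePath p L) :
    ((p 0).1 - (p L).1).natAbs + ((p 0).2 - (p L).2).natAbs ≤ L := by
  induction L with
  | zero => simp
  | succ L ih =>
    have := hp L L.lt_succ_self
    have := ih fun i hi => hp i (by omega)
    omega

lemma euclDist_le (hp : IsLatticePath p L) : euclDist (p 0) (p L) ≤ L := by
  set a : ℝ := (((p 0).1 - (p L).1 : ℤ) : ℝ)
  set b : ℝ := (((p 0).2 - (p L).2 : ℤ) : ℝ)
  have hl1 : |a| + |b| ≤ L := by
    have := hp.natAbs_add_natAbs_le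
    simp only [a, b, ← Int.cast_abs, ← Int.natCast_natAbs]
    exact_mod_cast this
  refine Real.sqrt_le_iff.2 ⟨(add_nonneg (abs_nonneg a) (abs_nonneg b)).trans hl1, ?_⟩
  nlinarith [sq_abs a, sq_abs b, abs_nonneg a, abs_nonneg b]

variable {S : ℤ × ℤ → Prop} {c : ℤ × ℤ → Bool} {b : Bool}

lemma exists_shortcut (hp : IsLatticePath p L) (hS : ∀ i ≤ L, S (p i)) {m n : ℕ}
    (hmn : m < n) (hnL : n ≤ L) (heq : p m = p n) :
    ∃ q : ℕ → ℤ × ℤ, IsLatticePath q (L - (n - m)) ∧ q 0 = p 0 ∧ q (L - (n - m)) = p L ∧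
      (∀ i ≤ L - (n - m), S (q i)) ∧ colourCount c b q (L - (n - m)) ≤ colourCount c b p L := by
  set σ : ℕ → ℕ := fun k => if k ≤ m then k else k + (n - m)
  have hσ_le : ∀ k ≤ L - (n - m), σ k ≤ L := fun k hk => by simp only [σ]; split_ifs <;> omega
  have hstep : ∀ k < L - (n - m), ∃ j < L, p (σ k) = p j ∧ p (σ (k + 1)) = p (j + 1) := by
    intro k hk
    rcases lt_trichotomy k m with h | rfl | h
    · exact ⟨k, by omega, by simp [σ, h.le], by simp [σ, show k + 1 ≤ m by omega]⟩
    · refine ⟨n, by omega, by simp [σ, heq], ?_⟩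
      simp only [σ, if_neg (show ¬k + 1 ≤ k by omega)]
      congr 1; omega
    · refine ⟨k + (n - m), by omega, by simp [σ, show ¬k ≤ m by omega], ?_⟩
      simp only [σ, if_neg (show ¬k + 1 ≤ m by omega)]
      congr 1; omega
  refine ⟨p ∘ σ, fun k hk => ?_, by simp [σ], ?_, fun k hk => hS _ (hσ_le k hk), ?_⟩
  · obtain ⟨j, hj, h₀, h₁⟩ := hstep k hk
    simpa only [Function.comp, h₀, h₁] using hp j hj
  · simp only [Function.comp, σ]
    split_ifs with h
    · rw [show L - (n - m) = m by omega, heq, show n = L by omega]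
    · congr 1; omega
  · refine card_le_card_of_injOn σ (fun k hk => ?_) (fun k _ k' _ h => ?_)
    · simp only [coe_filter, Set.mem_ofPred_eq, mem_Icc, Function.comp] at hk ⊢
      exact ⟨⟨by simp only [σ]; split_ifs <;> omega, hσ_le k hk.1.2⟩, hk.2⟩
    · simp only [σ] at h; split_ifs at h <;> omega

lemma exists_injOn (hp : IsLatticePath p L) (hS : ∀ i ≤ L, S (p i)) :
    ∃ (ℓ : ℕ) (q : ℕ → ℤ × ℤ), IsLatticePath q ℓ ∧ q 0 = p 0 ∧ q ℓ = p L ∧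
      (∀ i ≤ ℓ, S (q i)) ∧ Set.InjOn q (Set.Iic ℓ) ∧ colourCount c b q ℓ ≤ colourCount c b p L := by
  induction L using Nat.strong_induction_on generalizing p with
  | _ L ih =>
  by_cases hinj : Set.InjOn p (Set.Iic L)
  · exact ⟨L, p, hp, rfl, rfl, hS, hinj, le_rfl⟩
  obtain ⟨m, n, hmn, hnL, heq⟩ : ∃ m n, m < n ∧ n ≤ L ∧ p m = p n := by
    simp only [Set.InjOn, Set.mem_Iic, not_forall] at hinj
    obtain ⟨i, hi, j, hj, hij, hne⟩ := hinj
    rcases Nat.lt_or_gt_of_ne hne with h | h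
    exacts [⟨i, j, h, hj, hij⟩, ⟨j, i, h, hi, hij.symm⟩]
  obtain ⟨q, hq, hq0, hqL, hqS, hqc⟩ := hp.exists_shortcut (c := c) (b := b) hS hmn hnL heq
  obtain ⟨ℓ, q', hq', hq'0, hq'ℓ, hq'S, hinj', hq'c⟩ := ih _ (by omega) hq hqS
  exact ⟨ℓ, q', hq', hq'0.trans hq0, hq'ℓ.trans hqL, hq'S, hinj', hq'c.trans hqc⟩

end IsLatticePath

section Distances

variable {N : ℕ} {c : ℤ × ℤ → Bool} {x y : ℤ × ℤ}

lemma dZ_le_length {L : ℕ} {p : ℕ → ℤ × ℤ} (hp : IsLatticePath p L) (h0 : p 0 = x)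
    (hL : p L = y) (hbox : ∀ i ≤ L, InBox N (p i)) : dZ N x y ≤ L :=
  Nat.sInf_le ⟨p, hp, h0, hL, hbox⟩

lemma dChem_le_colourCount {L : ℕ} {p : ℕ → ℤ × ℤ} (hp : IsLatticePath p L) (h0 : p 0 = x)
    (hL : p L = y) (hbox : ∀ i ≤ L, InBox N (p i)) : dChem N c x y ≤ colourCount c false p L :=
  Nat.sInf_le ⟨L, p, hp, h0, hL, hbox, rfl⟩

lemma exists_path_of_dChem_ne_zero (h : dChem N c x y ≠ 0) :
    ∃ (L : ℕ) (p : ℕ → ℤ × ℤ), IsLatticePath p L ∧ p 0 = x ∧ p L = y ∧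
      (∀ i ≤ L, InBox N (p i)) := by
  obtain ⟨_, L, p, hp, h0, hL, hbox, -⟩ := Nat.nonempty_of_pos_sInf (Nat.pos_of_ne_zero h)
  exact ⟨L, p, hp, h0, hL, hbox⟩

lemma exists_path_of_dZ_ne_zero (h : dZ N x y ≠ 0) :
    ∃ (L : ℕ) (p : ℕ → ℤ × ℤ), IsLatticePath p L ∧ p 0 = x ∧ p L = y ∧
      (∀ i ≤ L, InBox N (p i)) := by
  obtain ⟨L, hL⟩ := Nat.nonempty_of_pos_sInf (Nat.pos_of_ne_zero h)
  exact ⟨L, hL⟩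

lemma exists_dZ_path {L : ℕ} {p : ℕ → ℤ × ℤ} (hp : IsLatticePath p L) (h0 : p 0 = x)
    (hL : p L = y) (hbox : ∀ i ≤ L, InBox N (p i)) :
    ∃ q : ℕ → ℤ × ℤ, IsLatticePath q (dZ N x y) ∧ q 0 = x ∧ q (dZ N x y) = y ∧
      ∀ i ≤ dZ N x y, InBox N (q i) :=
  Nat.sInf_mem (s := {L | ∃ p : ℕ → ℤ × ℤ, IsLatticePath p L ∧ p 0 = x ∧ p L = y ∧
    ∀ i ≤ L, InBox N (p i)}) ⟨L, p, hp, h0, hL, hbox⟩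

lemma exists_dChem_path {L : ℕ} {p : ℕ → ℤ × ℤ} (hp : IsLatticePath p L) (h0 : p 0 = x)
    (hL : p L = y) (hbox : ∀ i ≤ L, InBox N (p i)) :
    ∃ (L' : ℕ) (q : ℕ → ℤ × ℤ), IsLatticePath q L' ∧ q 0 = x ∧ q L' = y ∧
      (∀ i ≤ L', InBox N (q i)) ∧ dChem N c x y = colourCount c false q L' :=
  Nat.sInf_mem (s := {n | ∃ (L : ℕ) (p : ℕ → ℤ × ℤ), IsLatticePath p L ∧ p 0 = x ∧ p L = y ∧
    (∀ i ≤ L, InBox N (p i)) ∧ n = colourCount c false p L}) ⟨_, L, p, hp, h0, hL, hbox, rfl⟩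

lemma dChem_le_dZ : dChem N c x y ≤ dZ N x y := by
  rcases eq_or_ne (dChem N c x y) 0 with h | h
  · exact h ▸ Nat.zero_le _
  obtain ⟨L, p, hp, h0, hL, hbox⟩ := exists_path_of_dChem_ne_zero h
  obtain ⟨q, hq, hq0, hqL, hqbox⟩ := exists_dZ_path hp h0 hL hbox
  exact (dChem_le_colourCount hq hq0 hqL hqbox).trans (colourCount_le _ _ _ _)

lemma exists_injOn_path_of_dChem_lt (h : 10 * dChem N c x y < 9 * dZ N x y) :
    ∃ (ℓ : ℕ) (q : ℕ → ℤ × ℤ), IsLatticePath q ℓ ∧ q 0 = x ∧ q ℓ = y ∧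
      (∀ i ≤ ℓ, InBox N (q i)) ∧ Set.InjOn q (Set.Iic ℓ) ∧ ℓ < 10 * colourCount c true q ℓ := by
  obtain ⟨L, p, hp, h0, hL, hbox⟩ := exists_path_of_dZ_ne_zero (by omega : dZ N x y ≠ 0)
  obtain ⟨L, p, hp, rfl, rfl, hbox, hchem⟩ := exists_dChem_path (c := c) hp h0 hL hbox
  obtain ⟨ℓ, q, hq, hq0, hqℓ, hqbox, hinj, hblue⟩ := hp.exists_injOn (c := c) (b := false) hbox
  have hdZ : dZ N (p 0) (p L) ≤ ℓ := dZ_le_length hq hq0 hqℓ hqbox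
  have := colourCount_true_add_colourCount_false c q ℓ
  -- `10 · blue(q) ≤ 10 · d_chem < 9 · d_{ℤ²} ≤ 9ℓ`
  exact ⟨ℓ, q, hq, hq0, hqℓ, hqbox, hinj, by omega⟩

end Distances

def boxFinset (N : ℕ) : Finset (ℤ × ℤ) := Icc (-(N : ℤ)) N ×ˢ Icc (-(N : ℤ)) N

lemma mem_boxFinset {N : ℕ} {v : ℤ × ℤ} : v ∈ boxFinset N ↔ InBox N v := by
  simp [boxFinset, InBox, abs_le]

lemma card_boxFinset (N : ℕ) : #(boxFinset N) = (2 * N + 1) ^ 2 := by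
  rw [boxFinset, card_product, Int.card_Icc, sq]
  congr <;> omega

lemma exists_heavy_path_of_not_comparable {N : ℕ} {c : ℤ × ℤ → Bool} {x y : ℤ × ℤ}
    (hlog : Real.log N ≤ euclDist x y)
    (h : ¬((9 / 10 : ℝ) * dZ N x y ≤ dChem N c x y ∧ dChem N c x y ≤ dZ N x y)) :
    ∃ (ℓ : ℕ) (q : ℕ → ℤ × ℤ), Real.log N ≤ ℓ ∧ IsLatticePath q ℓ ∧ q 0 ∈ boxFinset N ∧
      Set.InjOn q (Set.Iic ℓ) ∧ ℓ / 10 + 1 ≤ colourCount c true q ℓ := by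
  have hlt : 10 * dChem N c x y < 9 * dZ N x y := by
    by_contra! hge
    refine h ⟨?_, dChem_le_dZ⟩
    have : (9 : ℝ) * dZ N x y ≤ 10 * dChem N c x y := by exact_mod_cast hge
    linarith
  obtain ⟨ℓ, q, hq, rfl, rfl, hbox, hinj, hyellow⟩ := exists_injOn_path_of_dChem_lt hlt
  exact ⟨ℓ, q, hlog.trans hq.euclDist_le, hq, mem_boxFinset.2 (hbox 0 ℓ.zero_le), hinj, by omega⟩

def unitSteps : Finset (ℤ × ℤ) := {(1, 0), (-1, 0), (0, 1), (0, -1)}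

lemma mem_unitSteps {d : ℤ × ℤ} (h : d.1.natAbs + d.2.natAbs = 1) : d ∈ unitSteps := by
  obtain ⟨a, b⟩ := d
  simp only [unitSteps, mem_insert, mem_singleton, Prod.mk.injEq]
  omega

lemma card_unitSteps : #unitSteps = 4 := by decide

def pathOfSteps {ℓ : ℕ} (x : ℤ × ℤ) (d : Fin ℓ → ℤ × ℤ) (n : ℕ) : ℤ × ℤ :=
  x + ∑ i ∈ range n, if h : i < ℓ then d ⟨i, h⟩ else 0

lemma pathOfSteps_sub (q : ℕ → ℤ × ℤ) {ℓ n : ℕ} (hn : n ≤ ℓ) :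
    pathOfSteps (q 0) (fun i : Fin ℓ => q (i + 1) - q i) n = q n := by
  rw [pathOfSteps, sum_congr rfl (g := fun i => q (i + 1) - q i), sum_range_sub, add_sub_cancel]
  intro i hi
  rw [dif_pos (by rw [mem_range] at hi; omega)]

/-- A path is encoded by its start in `S` and its unit steps; the sets of `k` of its vertices
`x₁, …, x_ℓ` are kept only when they really have `k` elements, as on a self-avoiding path. -/
def pathVertexSets (S : Finset (ℤ × ℤ)) (ℓ k : ℕ) : Finset (Finset (ℤ × ℤ)) :=
  {F ∈ (S ×ˢ Fintype.piFinset (fun _ : Fin ℓ => unitSteps) ×ˢ (Icc 1 ℓ).powersetCard k).image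
    (fun t => t.2.2.image (pathOfSteps t.1 t.2.1)) | #F = k}

lemma card_pathVertexSets_le (S : Finset (ℤ × ℤ)) (ℓ k : ℕ) :
    #(pathVertexSets S ℓ k) ≤ #S * 4 ^ ℓ * ℓ.choose k :=
  (card_filter_le _ _).trans <| card_image_le.trans <| by
    simp [card_product, Fintype.card_piFinset, card_unitSteps, mul_assoc]

lemma exists_mem_pathVertexSets {S : Finset (ℤ × ℤ)} {ℓ k : ℕ} {c : ℤ × ℤ → Bool}
    {q : ℕ → ℤ × ℤ} (hq : IsLatticePath q ℓ) (h0 : q 0 ∈ S) (hinj : Set.InjOn q (Set.Iic ℓ))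
    (hk : k ≤ colourCount c true q ℓ) :
    ∃ F ∈ pathVertexSets S ℓ k, ∀ v ∈ F, c v = true := by
  obtain ⟨I, hIyellow, hIcard⟩ := exists_subset_card_eq hk
  have hI : ∀ i ∈ I, 1 ≤ i ∧ i ≤ ℓ := fun i hi => mem_Icc.1 (mem_filter.1 (hIyellow hi)).1
  have himage : I.image (pathOfSteps (q 0) fun i : Fin ℓ => q (i + 1) - q i) = I.image q :=
    image_congr fun i hi => pathOfSteps_sub q (hI i hi).2
  refine ⟨I.image q, mem_filter.2 ⟨mem_image.2 ⟨(q 0, fun i => q (i + 1) - q i, I), ?_, himage⟩,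
    ?_⟩, ?_⟩
  · simp only [mem_product, Fintype.mem_piFinset, mem_powersetCard]
    exact ⟨h0, fun i => mem_unitSteps (hq i i.isLt), fun i hi => mem_Icc.2 (hI i hi), hIcard⟩
  · rw [card_image_of_injOn (hinj.mono fun i hi => (hI i hi).2), hIcard]
  · simp only [mem_image]
    rintro _ ⟨i, hi, rfl⟩
    exact (mem_filter.1 (hIyellow hi)).2

section Colouring

variable {Ω : Type*} [MeasurableSpace Ω] {P : Measure Ω} {r : ℝ}

lemma measure_forall_eq_true {V : Type*} {C : Ω → V → Bool}
    (hind : ∀ (F : Finset V) (a : V → Bool),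
      P {ω | ∀ v ∈ F, C ω v = a v} = ∏ v ∈ F, P {ω | C ω v = a v})
    (hmarg : ∀ v, P {ω | C ω v = true} = ENNReal.ofReal r) (F : Finset V) :
    P {ω | ∀ v ∈ F, C ω v = true} = ENNReal.ofReal r ^ #F := by
  rw [hind F fun _ => true, prod_congr rfl fun v _ => hmarg v, prod_const]

lemma measure_biUnion_forall_eq_true_le {V : Type*} {C : Ω → V → Bool}
    (hind : ∀ (F : Finset V) (a : V → Bool),
      P {ω | ∀ v ∈ F, C ω v = a v} = ∏ v ∈ F, P {ω | C ω v = a v})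
    (hmarg : ∀ v, P {ω | C ω v = true} = ENNReal.ofReal r)
    (𝓕 : Finset (Finset V)) {k : ℕ} (hk : ∀ F ∈ 𝓕, #F = k) :
    P (⋃ F ∈ 𝓕, {ω | ∀ v ∈ F, C ω v = true}) ≤ #𝓕 * ENNReal.ofReal r ^ k :=
  calc P (⋃ F ∈ 𝓕, {ω | ∀ v ∈ F, C ω v = true})
      ≤ ∑ F ∈ 𝓕, P {ω | ∀ v ∈ F, C ω v = true} := measure_biUnion_finset_le _ _
    _ = ∑ _F ∈ 𝓕, ENNReal.ofReal r ^ k :=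
      sum_congr rfl fun F hF => by rw [measure_forall_eq_true hind hmarg, hk F hF]
    _ = #𝓕 * ENNReal.ofReal r ^ k := by rw [sum_const, nsmul_eq_mul]

lemma measure_exists_heavy_path_le {C : Ω → ℤ × ℤ → Bool}
    (hind : ∀ (F : Finset (ℤ × ℤ)) (a : ℤ × ℤ → Bool),
      P {ω | ∀ v ∈ F, C ω v = a v} = ∏ v ∈ F, P {ω | C ω v = a v})
    (hmarg : ∀ v, P {ω | C ω v = true} = ENNReal.ofReal r) (S : Finset (ℤ × ℤ)) (ℓ k : ℕ) :
    P {ω | ∃ q : ℕ → ℤ × ℤ, IsLatticePath q ℓ ∧ q 0 ∈ S ∧ Set.InjOn q (Set.Iic ℓ) ∧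
        k ≤ colourCount (C ω) true q ℓ} ≤
      #S * 4 ^ ℓ * ℓ.choose k * ENNReal.ofReal r ^ k :=
  calc _ ≤ P (⋃ F ∈ pathVertexSets S ℓ k, {ω | ∀ v ∈ F, C ω v = true}) :=
        measure_mono fun ω hω => by
          obtain ⟨q, hq, h0, hinj, hk⟩ := hω
          simpa using exists_mem_pathVertexSets hq h0 hinj hk
    _ ≤ #(pathVertexSets S ℓ k) * ENNReal.ofReal r ^ k :=
        measure_biUnion_forall_eq_true_le hind hmarg _ fun _ hF => (mem_filter.1 hF).2
    _ ≤ #S * 4 ^ ℓ * ℓ.choose k * ENNReal.ofReal r ^ k := by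
        gcongr
        exact_mod_cast card_pathVertexSets_le S ℓ k

lemma ofReal_one_sub_le_of_measure_compl_le [IsProbabilityMeasure P] {s : Set Ω} {ε : ℝ}
    (hε : 0 ≤ ε) (h : P sᶜ ≤ ENNReal.ofReal ε) : ENNReal.ofReal (1 - ε) ≤ P s := by
  rw [ENNReal.ofReal_sub _ hε, ENNReal.ofReal_one, tsub_le_iff_right]
  calc 1 = P (s ∪ sᶜ) := by rw [Set.union_compl_self, measure_univ]
    _ ≤ P s + P sᶜ := measure_union_le _ _
    _ ≤ P s + ENNReal.ofReal ε := by gcongr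

end Colouring

lemma eight_pow_mul_pow_le {r : ℝ} (hr0 : 0 ≤ r) (hr : r ≤ Real.exp (-400)) (ℓ : ℕ) :
    8 ^ ℓ * r ^ (ℓ / 10 + 1) ≤ Real.exp (-32) ^ ℓ := by
  have h8 : (8 : ℝ) ≤ Real.exp 8 := by linarith [Real.add_one_le_exp 8]
  have hℓ : (ℓ : ℝ) ≤ 10 * ((ℓ / 10 + 1 : ℕ) : ℝ) := by
    exact_mod_cast (by omega : ℓ ≤ 10 * (ℓ / 10 + 1))
  calc 8 ^ ℓ * r ^ (ℓ / 10 + 1) ≤ Real.exp 8 ^ ℓ * Real.exp (-400) ^ (ℓ / 10 + 1) := by gcongr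
    _ = Real.exp (ℓ * 8 + (ℓ / 10 + 1 : ℕ) * (-400)) := by
      rw [Real.exp_add, Real.exp_nat_mul, Real.exp_nat_mul]
    _ ≤ Real.exp (ℓ * (-32)) := Real.exp_le_exp.2 (by linarith)
    _ = Real.exp (-32) ^ ℓ := Real.exp_nat_mul _ _

lemma four_pow_mul_choose_mul_pow_le {r : ℝ} (hr0 : 0 ≤ r) (hr : r ≤ Real.exp (-400)) (ℓ : ℕ) :
    (4 : ℝ≥0∞) ^ ℓ * ℓ.choose (ℓ / 10 + 1) * ENNReal.ofReal r ^ (ℓ / 10 + 1) ≤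
      ENNReal.ofReal (Real.exp (-32)) ^ ℓ :=
  calc (4 : ℝ≥0∞) ^ ℓ * ℓ.choose (ℓ / 10 + 1) * ENNReal.ofReal r ^ (ℓ / 10 + 1)
      ≤ 4 ^ ℓ * 2 ^ ℓ * ENNReal.ofReal r ^ (ℓ / 10 + 1) := by
        gcongr
        exact_mod_cast ℓ.choose_le_two_pow _
    _ = ENNReal.ofReal (8 ^ ℓ * r ^ (ℓ / 10 + 1)) := by
        rw [ENNReal.ofReal_mul (by positivity), ENNReal.ofReal_pow hr0,
          ENNReal.ofReal_pow (by norm_num), ← mul_pow]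
        norm_num
    _ ≤ ENNReal.ofReal (Real.exp (-32) ^ ℓ) :=
        ENNReal.ofReal_le_ofReal (eight_pow_mul_pow_le hr0 hr ℓ)
    _ = ENNReal.ofReal (Real.exp (-32)) ^ ℓ := ENNReal.ofReal_pow (Real.exp_nonneg _) _

lemma two_mul_sq_mul_exp_pow_le {N m : ℕ} (hN : 2 ≤ N) (hm : Real.log N ≤ m) :
    2 * (2 * (N : ℝ) + 1) ^ 2 * Real.exp (-32) ^ m ≤ 1 / (N : ℝ) ^ 2 := by
  have hn : (2 : ℝ) ≤ N := by exact_mod_cast hN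
  set n : ℝ := (N : ℝ)
  have hexp : n ^ 32 * Real.exp (-32) ^ m ≤ 1 :=
    calc n ^ 32 * Real.exp (-32) ^ m = Real.exp ((32 : ℕ) * Real.log n + m * (-32)) := by
          rw [Real.exp_add, Real.exp_nat_mul, Real.exp_nat_mul, Real.exp_log (by positivity)]
      _ ≤ 1 := Real.exp_le_one_iff.2 (by push_cast; linarith)
  have hpoly : 2 * (2 * n + 1) ^ 2 * n ^ 2 ≤ n ^ 32 :=
    calc 2 * (2 * n + 1) ^ 2 * n ^ 2 ≤ 2 * (3 * n) ^ 2 * n ^ 2 := by gcongr; linarith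
      _ = 18 * n ^ 4 := by ring
      _ ≤ n ^ 28 * n ^ 4 := by
          gcongr; exact le_trans (by norm_num) (pow_le_pow_left₀ (by norm_num) hn 28)
      _ = n ^ 32 := by ring
  rw [le_div_iff₀ (by positivity)]
  calc 2 * (2 * n + 1) ^ 2 * Real.exp (-32) ^ m * n ^ 2
      = 2 * (2 * n + 1) ^ 2 * n ^ 2 * Real.exp (-32) ^ m := by ring
    _ ≤ n ^ 32 * Real.exp (-32) ^ m := by gcongr
    _ ≤ 1 := hexp

lemma tsum_pow_add_le_two_mul {β : ℝ≥0∞} (hβ : β ≤ 2⁻¹) (m : ℕ) :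
    ∑' j, β ^ (m + j) ≤ 2 * β ^ m := by
  simp_rw [pow_add, ENNReal.tsum_mul_left, ENNReal.tsum_geometric]
  rw [mul_comm]
  gcongr
  calc (1 - β)⁻¹ ≤ (1 - 2⁻¹)⁻¹ := ENNReal.inv_le_inv.2 (tsub_le_tsub_left hβ 1)
    _ = 2 := by rw [ENNReal.one_sub_inv_two, inv_inv]

lemma tsum_card_boxFinset_mul_pow_le {N m : ℕ} (hN : 2 ≤ N) (hm : Real.log N ≤ m) :
    ∑' j, (#(boxFinset N) : ℝ≥0∞) * ENNReal.ofReal (Real.exp (-32)) ^ (m + j) ≤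
      ENNReal.ofReal (1 / (N : ℝ) ^ 2) := by
  have hβ : ENNReal.ofReal (Real.exp (-32)) ≤ 2⁻¹ := by
    refine ENNReal.ofReal_le_of_le_toReal ?_
    rw [ENNReal.toReal_inv, ENNReal.toReal_ofNat, ← one_div]
    exact (Real.exp_le_exp.2 (by norm_num)).trans Real.exp_neg_one_lt_half.le
  calc ∑' j, (#(boxFinset N) : ℝ≥0∞) * ENNReal.ofReal (Real.exp (-32)) ^ (m + j)
      = #(boxFinset N) * ∑' j, ENNReal.ofReal (Real.exp (-32)) ^ (m + j) := ENNReal.tsum_mul_left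
    _ ≤ #(boxFinset N) * (2 * ENNReal.ofReal (Real.exp (-32)) ^ m) := by
        gcongr; exact tsum_pow_add_le_two_mul hβ m
    _ = ENNReal.ofReal (((2 * N + 1) ^ 2 : ℕ) * (2 * Real.exp (-32) ^ m)) := by
        rw [card_boxFinset, ENNReal.ofReal_mul (by positivity), ENNReal.ofReal_natCast,
          ENNReal.ofReal_mul zero_le_two, ENNReal.ofReal_pow (Real.exp_nonneg _),
          ENNReal.ofReal_ofNat]
    _ ≤ ENNReal.ofReal (1 / (N : ℝ) ^ 2) := ENNReal.ofReal_le_ofReal <| by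
        push_cast
        linarith [two_mul_sq_mul_exp_pow_le hN hm]

/-- There is a universal `r₀ ∈ (0, 1/2)` such that for every `r ∈ (0, r₀)` and
`N ≥ 1`, if the vertices of `ℤ²` are coloured independently, yellow with probability `r` and blue
with probability `1 − r`, then with probability at least `1 − 1/N²`, for all
`x, y ∈ [−N,N] × [−N,N]` with `|x − y| ≥ log N` one has
`(9/10)·d_{ℤ²}(x,y) ≤ d_chem(x,y) ≤ d_{ℤ²}(x,y)`. -/
theorem chemical_distance_comparable :
    ∃ r₀ : ℝ, 0 < r₀ ∧ r₀ < 1/2 ∧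
      ∀ r : ℝ, 0 < r → r < r₀ → ∀ N : ℕ, 1 ≤ N →
      ∀ (Ω : Type) (_ : MeasurableSpace Ω) (P : Measure Ω), IsProbabilityMeasure P →
      ∀ C : Ω → (ℤ × ℤ) → Bool,
      (∀ v, Measurable fun ω => C ω v) →
      (∀ (F : Finset (ℤ × ℤ)) (a : (ℤ × ℤ) → Bool),
        P {ω | ∀ v ∈ F, C ω v = a v} = ∏ v ∈ F, P {ω | C ω v = a v}) →
      (∀ v, P {ω | C ω v = true} = ENNReal.ofReal r) →
      ENNReal.ofReal (1 - 1/(N:ℝ)^2) ≤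
        P {ω | ∀ x y : ℤ × ℤ, InBox N x → InBox N y → Real.log N ≤ euclDist x y →
          (9/10 : ℝ) * (dZ N x y : ℝ) ≤ (dChem N (C ω) x y : ℝ) ∧
            dChem N (C ω) x y ≤ dZ N x y} := by
  refine ⟨Real.exp (-400), Real.exp_pos _,
    (Real.exp_le_exp.2 (by norm_num)).trans_lt Real.exp_neg_one_lt_half, ?_⟩
  intro r hr0 hr N hN Ω _ P _ C _ hind hmarg
  obtain rfl | hN2 : N = 1 ∨ 2 ≤ N := by omega
  · simp
  set m := ⌈Real.log N⌉₊
  set heavy : ℕ → Set Ω := fun ℓ => {ω | ∃ q : ℕ → ℤ × ℤ, IsLatticePath q ℓ ∧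
    q 0 ∈ boxFinset N ∧ Set.InjOn q (Set.Iic ℓ) ∧ ℓ / 10 + 1 ≤ colourCount (C ω) true q ℓ}
  refine ofReal_one_sub_le_of_measure_compl_le (by positivity)
    ((measure_mono (t := ⋃ j, heavy (m + j)) ?_).trans ?_)
  · intro ω hω
    simp only [Set.mem_compl_iff, Set.mem_ofPred_eq, not_forall] at hω
    obtain ⟨x, y, -, -, hlog, hfail⟩ := hω
    obtain ⟨ℓ, q, hℓ, hq⟩ := exists_heavy_path_of_not_comparable hlog hfail
    refine Set.mem_iUnion.2 ⟨ℓ - m, ?_⟩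
    rw [show m + (ℓ - m) = ℓ by have := Nat.ceil_le.2 hℓ; omega]
    exact ⟨q, hq⟩
  calc _ ≤ ∑' j, P (heavy (m + j)) := measure_iUnion_le _
    _ ≤ ∑' j, (#(boxFinset N) : ℝ≥0∞) * ENNReal.ofReal (Real.exp (-32)) ^ (m + j) := by
      refine ENNReal.tsum_le_tsum fun j => (measure_exists_heavy_path_le hind hmarg _ _ _).trans ?_
      rw [mul_assoc, mul_assoc]
      gcongr
      rw [← mul_assoc]
      exact four_pow_mul_choose_mul_pow_le hr0.le hr.le _
    _ ≤ ENNReal.ofReal (1 / (N : ℝ) ^ 2) := tsum_card_boxFinset_mul_pow_le hN2 (Nat.le_ceil _)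

end
end

section
/- Let V ⊆ ℝ² be a nonempty set, let v ∈ V, and let δ > 0. Suppose that every closed cell [jδ, (j+1)δ] × [kδ, (k+1)δ] (j, k ∈ ℤ) of the grid δℤ² that intersects the closed ball B̄(v, 2√2·δ) contains a point of V. Then the Voronoi cell F_v = {z ∈ ℝ² : |z − v| ≤ |z − y| for all y ∈ V} is contained in the closed ball B̄(v, √2·δ). -/
open Metric

/-- The closed cell `[jδ, (j+1)δ] × [kδ, (k+1)δ]` of the grid `δℤ²`, as a subset of `ℂ ≅ ℝ²`. -/
def gridCell (δ : ℝ) (j k : ℤ) : Set ℂ :=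
  {z | j * δ ≤ z.re ∧ z.re ≤ (j + 1) * δ ∧ k * δ ≤ z.im ∧ z.im ≤ (k + 1) * δ}

/-- The Voronoi cell of `v` with respect to the set `V`. -/
def voronoiCell (V : Set ℂ) (v : ℂ) : Set ℂ := {z | ∀ y ∈ V, dist z v ≤ dist z y}

/-- If every closed cell of the grid `δℤ²` meeting `B̄(v, 2√2·δ)` contains a
point of `V`, then the Voronoi cell of `v ∈ V` is contained in `B̄(v, √2·δ)`. -/
theorem voronoi_cell_small (V : Set ℂ) (hV : V.Nonempty) (v : ℂ) (hv : v ∈ V)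
    (δ : ℝ) (hδ : 0 < δ)
    (hcells : ∀ j k : ℤ,
      (gridCell δ j k ∩ Metric.closedBall v (2 * Real.sqrt 2 * δ)).Nonempty →
      (V ∩ gridCell δ j k).Nonempty) :
    voronoiCell V v ⊆ Metric.closedBall v (Real.sqrt 2 * δ) := by
  intro z hz
  rw [Metric.mem_closedBall]
  by_contra h
  push_neg at h
  set D := dist z v with hD
  have hs2 : (0:ℝ) < Real.sqrt 2 * δ := by positivity
  have hDpos : 0 < D := lt_trans hs2 h
  set d := min D (2 * Real.sqrt 2 * δ) with hd
  have hdgt : Real.sqrt 2 * δ < d := lt_min h (by nlinarith)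
  have hdpos : 0 < d := lt_trans hs2 hdgt
  have hdD : d ≤ D := min_le_left _ _
  have hd2 : d ≤ 2 * Real.sqrt 2 * δ := min_le_right _ _
  set p : ℂ := v + (d / D : ℝ) • (z - v) with hp
  have hnormzv : ‖z - v‖ = D := by rw [hD, dist_eq_norm]
  have hpv : dist p v = d := by
    rw [dist_eq_norm]
    have : p - v = (d / D : ℝ) • (z - v) := by rw [hp]; ring
    rw [this, norm_smul, hnormzv, Real.norm_eq_abs,
      abs_of_nonneg (by positivity : (0:ℝ) ≤ d / D)]
    field_simp
  have hzp : dist z p = D - d := by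
    rw [dist_eq_norm]
    have : z - p = (1 - d / D : ℝ) • (z - v) := by
      rw [hp]
      module
    rw [this, norm_smul, hnormzv, Real.norm_eq_abs,
      abs_of_nonneg (by rw [sub_nonneg]; exact div_le_one_of_le₀ hdD hDpos.le)]
    field_simp
  set j : ℤ := ⌊p.re / δ⌋ with hj
  set k : ℤ := ⌊p.im / δ⌋ with hk
  have hpcell : p ∈ gridCell δ j k := by
    refine ⟨?_, ?_, ?_, ?_⟩
    · have := Int.floor_le (p.re / δ)
      calc (j:ℝ) * δ ≤ (p.re / δ) * δ := by
            exact mul_le_mul_of_nonneg_right this hδ.le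
        _ = p.re := by field_simp
    · have := (Int.lt_floor_add_one (p.re / δ)).le
      calc p.re = (p.re / δ) * δ := by field_simp
        _ ≤ ((j:ℝ) + 1) * δ := mul_le_mul_of_nonneg_right this hδ.le
    · have := Int.floor_le (p.im / δ)
      calc (k:ℝ) * δ ≤ (p.im / δ) * δ := by
            exact mul_le_mul_of_nonneg_right this hδ.le
        _ = p.im := by field_simp
    · have := (Int.lt_floor_add_one (p.im / δ)).le
      calc p.im = (p.im / δ) * δ := by field_simp
        _ ≤ ((k:ℝ) + 1) * δ := mul_le_mul_of_nonneg_right this hδ.le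
  obtain ⟨y, hyV, hycell⟩ := hcells j k ⟨p, hpcell, by
    rw [Metric.mem_closedBall, hpv]; exact hd2⟩
  obtain ⟨hy1, hy2, hy3, hy4⟩ := hycell
  obtain ⟨hp1, hp2, hp3, hp4⟩ := hpcell
  have hre : (p.re - y.re)^2 ≤ δ^2 := by
    have h1 : ((j:ℝ) + 1) * δ = (j:ℝ) * δ + δ := by ring
    nlinarith [hy1, hy2, hp1, hp2]
  have him : (p.im - y.im)^2 ≤ δ^2 := by nlinarith [hy3, hy4, hp3, hp4]
  have hpy : dist p y ≤ Real.sqrt 2 * δ := by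
    rw [Complex.dist_eq_re_im]
    have : (p.re - y.re)^2 + (p.im - y.im)^2 ≤ 2 * δ^2 := by linarith
    calc Real.sqrt ((p.re - y.re)^2 + (p.im - y.im)^2)
        ≤ Real.sqrt (2 * δ^2) := Real.sqrt_le_sqrt this
      _ = Real.sqrt 2 * δ := by
          rw [Real.sqrt_mul (by norm_num), Real.sqrt_sq hδ.le]
  have hzy : dist z y ≤ D - d + Real.sqrt 2 * δ := by
    calc dist z y ≤ dist z p + dist p y := dist_triangle _ _ _
      _ ≤ D - d + Real.sqrt 2 * δ := by rw [hzp]; linarith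
  have := hz y hyV
  rw [← hD] at this
  linarith
end

section
/- Let V ⊆ ℝ² be a nonempty set, let v, w ∈ V, and let δ > 0. Suppose that every closed cell [jδ, (j+1)δ] × [kδ, (k+1)δ] (j, k ∈ ℤ) of the grid δℤ² that intersects the closed ball B̄(v, 2√2·δ) contains a point of V. If the Voronoi cells of v and w intersect, i.e. F_v ∩ F_w ≠ ∅ (the defining condition of v and w being joined by a Delauney edge), then |v − w| ≤ 2√2·δ. -/
open Metric

lemma mem_gridCell_floor (δ : ℝ) (hδ : 0 < δ) (q : ℂ) :
    q ∈ gridCell δ ⌊q.re / δ⌋ ⌊q.im / δ⌋ := by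
  have h1 : (⌊q.re / δ⌋ : ℝ) ≤ q.re / δ := Int.floor_le _
  have h2 : q.re / δ ≤ ⌊q.re / δ⌋ + 1 := le_of_lt (Int.lt_floor_add_one _)
  have h3 : (⌊q.im / δ⌋ : ℝ) ≤ q.im / δ := Int.floor_le _
  have h4 : q.im / δ ≤ ⌊q.im / δ⌋ + 1 := le_of_lt (Int.lt_floor_add_one _)
  refine ⟨?_, ?_, ?_, ?_⟩
  · exact (le_div_iff₀ hδ).mp h1
  · exact (div_le_iff₀ hδ).mp h2
  · exact (le_div_iff₀ hδ).mp h3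
  · exact (div_le_iff₀ hδ).mp h4

lemma dist_le_of_same_cell {δ : ℝ} (hδ : 0 < δ) {j k : ℤ} {a b : ℂ}
    (ha : a ∈ gridCell δ j k) (hb : b ∈ gridCell δ j k) :
    dist a b ≤ Real.sqrt 2 * δ := by
  obtain ⟨ha1, ha2, ha3, ha4⟩ := ha
  obtain ⟨hb1, hb2, hb3, hb4⟩ := hb
  rw [Complex.dist_eq_re_im]
  have hre : (a.re - b.re) ^ 2 ≤ δ ^ 2 := by
    nlinarith
  have him : (a.im - b.im) ^ 2 ≤ δ ^ 2 := by
    nlinarith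
  calc Real.sqrt ((a.re - b.re) ^ 2 + (a.im - b.im) ^ 2)
      ≤ Real.sqrt (2 * δ ^ 2) := Real.sqrt_le_sqrt (by linarith)
    _ = Real.sqrt 2 * δ := by
        rw [Real.sqrt_mul (by norm_num), Real.sqrt_sq hδ.le]

/-- If every closed cell of the grid `δℤ²` meeting `B̄(v, 2√2·δ)` contains a
point of `V`, and `v, w ∈ V` are joined by a Delauney edge (their Voronoi cells intersect), then
`|v − w| ≤ 2√2·δ`. -/
theorem delauney_edges_short (V : Set ℂ) (hV : V.Nonempty) (v w : ℂ) (hv : v ∈ V) (hw : w ∈ V)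
    (δ : ℝ) (hδ : 0 < δ)
    (hcells : ∀ j k : ℤ,
      (gridCell δ j k ∩ Metric.closedBall v (2 * Real.sqrt 2 * δ)).Nonempty →
      (V ∩ gridCell δ j k).Nonempty)
    (hedge : (voronoiCell V v ∩ voronoiCell V w).Nonempty) :
    dist v w ≤ 2 * Real.sqrt 2 * δ := by
  obtain ⟨z, hzv, hzw⟩ := hedge
  set R := 2 * Real.sqrt 2 * δ with hRdef
  have hs2 : 0 < Real.sqrt 2 := Real.sqrt_pos.mpr (by norm_num)
  have hR : 0 < R := by positivity
  have hzle : dist z v ≤ R := by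
    by_contra hfar
    push_neg at hfar
    set d := dist z v with hd
    have hd0 : 0 < d := hR.trans hfar
    set p := v + (R / d : ℝ) * (z - v) with hp
    have hpv : dist p v = R := by
      have : p - v = (R / d : ℝ) * (z - v) := by rw [hp]; ring
      rw [dist_eq_norm, this, norm_mul]
      simp only [Complex.norm_real, Real.norm_eq_abs]
      rw [abs_of_pos (by positivity), ← dist_eq_norm, ← hd]
      field_simp
    have hzp : dist z p = d - R := by
      have h1 : z - p = ((1 - R / d : ℝ) : ℂ) * (z - v) := by
        rw [hp]; push_cast; ring
      have hle1 : R / d ≤ 1 := by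
        rw [div_le_one hd0]; exact hfar.le
      rw [dist_eq_norm, h1, norm_mul]
      simp only [Complex.norm_real, Real.norm_eq_abs]
      rw [abs_of_nonneg (by linarith), ← dist_eq_norm, ← hd]
      field_simp
    obtain ⟨y, hyV, hycell⟩ := hcells ⌊p.re / δ⌋ ⌊p.im / δ⌋
      ⟨p, mem_gridCell_floor δ hδ p, by
        simp only [Metric.mem_closedBall]; rw [hpv]⟩
    have hpy : dist p y ≤ Real.sqrt 2 * δ :=
      dist_le_of_same_cell hδ (mem_gridCell_floor δ hδ p) hycell
    have h1 : dist z y ≤ d - R + Real.sqrt 2 * δ := by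
      calc dist z y ≤ dist z p + dist p y := dist_triangle _ _ _
        _ ≤ d - R + Real.sqrt 2 * δ := by rw [hzp]; linarith
    have h2 : d ≤ dist z y := hzv y hyV
    have : Real.sqrt 2 * δ < R := by
      rw [hRdef]; nlinarith
    linarith
  obtain ⟨y, hyV, hycell⟩ := hcells ⌊z.re / δ⌋ ⌊z.im / δ⌋
    ⟨z, mem_gridCell_floor δ hδ z, by simp only [Metric.mem_closedBall]; exact hzle⟩
  have hzy : dist z y ≤ Real.sqrt 2 * δ :=
    dist_le_of_same_cell hδ (mem_gridCell_floor δ hδ z) hycell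
  have h1 : dist z v ≤ Real.sqrt 2 * δ := (hzv y hyV).trans hzy
  have h2 : dist z w ≤ Real.sqrt 2 * δ := (hzw y hyV).trans hzy
  calc dist v w ≤ dist v z + dist z w := dist_triangle _ _ _
    _ ≤ 2 * Real.sqrt 2 * δ := by rw [dist_comm v z]; linarith
end

section
/- For δ > 0, define μ_δ : ℂ → ℂ by μ_δ(z) = 1/3 if ⌊Re(z)/δ⌋ is odd and μ_δ(z) = −1/3 if ⌊Re(z)/δ⌋ is even. Then μ_δ converges weakly to 0 as δ → 0⁺: for every integrable function φ ∈ L¹(ℂ; ℂ), ∫_ℂ μ_δ(z)·φ(z) dA(z) → 0 as δ → 0⁺. -/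
/-!
Shifting by `δ` flips the sign of `μ_δ`, so `2 ∫ μ_δ φ = ∫ μ_δ (φ - φ(· + δ))` and
`‖∫ μ_δ φ‖ ≤ (1/6) ‖φ(· + δ) - φ‖₁`. The right-hand side tends to `0` as `δ → 0` because
translation is continuous in `L¹`, which follows by approximating `φ` in `L¹` by continuous
compactly supported functions, for which it is dominated convergence.
-/

open MeasureTheory

noncomputable section

/-- The Beltrami coefficient `μ_δ`: equal to `1/3` on the vertical strips where `⌊Re z / δ⌋` is
odd and to `−1/3` on those where it is even. -/
def muDelta (δ : ℝ) (z : ℂ) : ℂ :=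
  if Odd ⌊z.re / δ⌋ then (1/3 : ℂ) else (-(1/3) : ℂ)

open Filter Topology
open scoped Pointwise

section TranslationContinuity

variable {G E : Type*} [NormedAddCommGroup G] [MeasurableSpace G] [BorelSpace G]
  [NormedAddCommGroup E] {μ : Measure G}

theorem HasCompactSupport.tendsto_integral_norm_sub_comp_add [WeaklyLocallyCompactSpace G]
    [IsFiniteMeasureOnCompacts μ] {g : G → E} (hgs : HasCompactSupport g) (hg : Continuous g) :
    Tendsto (fun x => ∫ y, ‖g (y + x) - g y‖ ∂μ) (𝓝 0) (𝓝 0) := by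
  obtain ⟨V, hVc, hV⟩ := exists_compact_mem_nhds (0 : G)
  have hK : IsCompact (tsupport g - V) := by
    rw [← Set.sub_image_prod]
    exact (hgs.prod hVc).image continuous_sub
  set K := tsupport g - V
  obtain ⟨C, hC⟩ := hg.bounded_above_of_compact_support hgs
  have hbound : ∀ x ∈ V, ∀ y, ‖g (y + x) - g y‖ ≤ K.indicator (fun _ => 2 * C) y := by
    intro x hx y
    by_cases hy : y ∈ K
    · rw [Set.indicator_of_mem hy]
      linarith [norm_sub_le (g (y + x)) (g y), hC (y + x), hC y]
    · have hy₀ : y ∉ tsupport g := fun h => hy ⟨y, h, 0, mem_of_mem_nhds hV, sub_zero y⟩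
      have hyx : y + x ∉ tsupport g := fun h => hy ⟨y + x, h, x, hx, add_sub_cancel_right y x⟩
      simp [Set.indicator_of_notMem hy, image_eq_zero_of_notMem_tsupport hy₀,
        image_eq_zero_of_notMem_tsupport hyx]
  have hlim := tendsto_integral_filter_of_dominated_convergence (μ := μ) (l := 𝓝 (0 : G))
    (F := fun x y => ‖g (y + x) - g y‖) (f := fun _ => 0) (K.indicator fun _ => 2 * C)
    (Eventually.of_forall fun x =>
      ((hg.comp (continuous_id.add continuous_const)).sub hg).norm.aestronglyMeasurable)
    (eventually_of_mem hV fun x hx => Eventually.of_forall fun y => by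
      simpa using hbound x hx y)
    ((integrable_indicator_iff hK.isClosed.measurableSet).2
      (integrableOn_const hK.measure_lt_top.ne))
    (Eventually.of_forall fun y =>
      ((hg.comp (continuous_const.add continuous_id)).sub continuous_const).norm.tendsto' 0 0
        (by simp))
  simpa using hlim

theorem integral_norm_sub_comp_add_le [μ.IsAddRightInvariant] {f g : G → E}
    (hf : Integrable f μ) (hg : Integrable g μ) (x : G) :
    ∫ y, ‖f (y + x) - f y‖ ∂μ ≤ ∫ y, ‖g (y + x) - g y‖ ∂μ + 2 * ∫ y, ‖f y - g y‖ ∂μ := by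
  have hfgx : Integrable (fun y => ‖f (y + x) - g (y + x)‖) μ :=
    ((hf.comp_add_right x).sub (hg.comp_add_right x)).norm
  have hgx : Integrable (fun y => ‖g (y + x) - g y‖) μ := ((hg.comp_add_right x).sub hg).norm
  have hfg : Integrable (fun y => ‖f y - g y‖) μ := (hf.sub hg).norm
  have hsum : Integrable (fun y => ‖f (y + x) - g (y + x)‖ + ‖g (y + x) - g y‖) μ :=
    hfgx.add hgx
  have hshift : ∫ y, ‖f (y + x) - g (y + x)‖ ∂μ = ∫ y, ‖f y - g y‖ ∂μ :=
    integral_add_right_eq_self (fun y => ‖f y - g y‖) x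
  calc ∫ y, ‖f (y + x) - f y‖ ∂μ
      ≤ ∫ y, (‖f (y + x) - g (y + x)‖ + ‖g (y + x) - g y‖ + ‖f y - g y‖) ∂μ := by
        refine integral_mono ((hf.comp_add_right x).sub hf).norm (hsum.add hfg)
          fun y => ?_
        calc ‖f (y + x) - f y‖
            = ‖(f (y + x) - g (y + x)) + (g (y + x) - g y) - (f y - g y)‖ := by
              congr 1; abel
          _ ≤ _ := (norm_sub_le _ _).trans (add_le_add_left (norm_add_le _ _) _)
    _ = ∫ y, ‖g (y + x) - g y‖ ∂μ + 2 * ∫ y, ‖f y - g y‖ ∂μ := by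
        rw [integral_add hsum hfg, integral_add hfgx hgx, hshift]
        ring

theorem Integrable.tendsto_integral_norm_sub_comp_add [NormedSpace ℝ E]
    [WeaklyLocallyCompactSpace G] [μ.IsAddRightInvariant] [μ.Regular] {f : G → E}
    (hf : Integrable f μ) :
    Tendsto (fun x => ∫ y, ‖f (y + x) - f y‖ ∂μ) (𝓝 0) (𝓝 0) := by
  refine tendsto_order.2 ⟨fun a ha => Eventually.of_forall fun x =>
    ha.trans_le (integral_nonneg fun _ => norm_nonneg _), fun ε hε => ?_⟩
  obtain ⟨g, hgs, hfg, hg, hgi⟩ :=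
    hf.exists_hasCompactSupport_integral_sub_le (show 0 < ε / 4 by positivity)
  filter_upwards [(hgs.tendsto_integral_norm_sub_comp_add (μ := μ) hg).eventually
    (gt_mem_nhds (show 0 < ε / 2 by positivity))] with x hx
  linarith [integral_norm_sub_comp_add_le hf hgi x]

end TranslationContinuity

theorem norm_integral_mul_le_of_antiperiodic {G 𝕜 : Type*} [AddGroup G] [MeasurableSpace G]
    [MeasurableAdd G] {μ : Measure G} [μ.IsAddRightInvariant] [RCLike 𝕜] {m φ : G → 𝕜} {a : G}
    {M : ℝ} (hm : Function.Antiperiodic m a) (hm_meas : AEStronglyMeasurable m μ)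
    (hmM : ∀ z, ‖m z‖ ≤ M) (hφ : Integrable φ μ) :
    ‖∫ z, m z * φ z ∂μ‖ ≤ M / 2 * ∫ z, ‖φ (z + a) - φ z‖ ∂μ := by
  have hφa := hφ.comp_add_right a
  have hshift : ∫ z, m z * φ (z + a) ∂μ = -∫ z, m z * φ z ∂μ := by
    rw [← integral_add_right_eq_self (fun z => m z * φ z) a, ← integral_neg]
    simp_rw [show ∀ z, m (z + a) = -m z from hm, neg_mul, neg_neg]
  have htwice : 2 * ∫ z, m z * φ z ∂μ = ∫ z, m z * (φ z - φ (z + a)) ∂μ := by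
    simp_rw [mul_sub]
    rw [integral_sub (hφ.bdd_mul hm_meas (.of_forall hmM)) (hφa.bdd_mul hm_meas (.of_forall hmM)),
      hshift]
    ring
  have htwice_norm : 2 * ‖∫ z, m z * φ z ∂μ‖ ≤ M * ∫ z, ‖φ (z + a) - φ z‖ ∂μ :=
    calc 2 * ‖∫ z, m z * φ z ∂μ‖ = ‖∫ z, m z * (φ z - φ (z + a)) ∂μ‖ := by
          rw [← htwice, norm_mul, RCLike.norm_two]
      _ ≤ ∫ z, ‖m z * (φ z - φ (z + a))‖ ∂μ := norm_integral_le_integral_norm _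
      _ ≤ ∫ z, M * ‖φ (z + a) - φ z‖ ∂μ :=
          integral_mono_of_nonneg (.of_forall fun _ => norm_nonneg _)
            ((hφa.sub hφ).norm.const_mul M) (.of_forall fun z => by
              dsimp only
              rw [norm_mul, norm_sub_rev]
              exact mul_le_mul_of_nonneg_right (hmM z) (norm_nonneg _))
      _ = M * ∫ z, ‖φ (z + a) - φ z‖ ∂μ := integral_const_mul _ _
  linarith

theorem norm_muDelta (δ : ℝ) (z : ℂ) : ‖muDelta δ z‖ = 1 / 3 := by
  unfold muDelta
  split <;> simp

theorem measurable_muDelta (δ : ℝ) : Measurable (muDelta δ) :=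
  (measurable_from_top (f := fun n : ℤ => if Odd n then (1/3 : ℂ) else (-(1/3) : ℂ))).comp
    (Complex.measurable_re.div_const δ).floor

theorem muDelta_antiperiodic {δ : ℝ} (hδ : δ ≠ 0) : Function.Antiperiodic (muDelta δ) δ := by
  intro z
  have hfloor : ⌊(z + δ).re / δ⌋ = ⌊z.re / δ⌋ + 1 := by
    rw [Complex.add_re, Complex.ofReal_re, add_div, div_self hδ, Int.floor_add_one]
  unfold muDelta
  rw [hfloor]
  rcases Int.even_or_odd ⌊z.re / δ⌋ with h | h
  · rw [if_pos h.add_one, if_neg (Int.not_odd_iff_even.mpr h), neg_neg]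
  · rw [if_neg (Int.not_odd_iff_even.mpr h.add_one), if_pos h]

/-- `μ_δ` converges weakly to `0` as `δ → 0⁺`: for every integrable
`φ : ℂ → ℂ`, `∫_ℂ μ_δ(z)·φ(z) dA(z) → 0`. -/
theorem muDelta_tendsto_weakly_zero (φ : ℂ → ℂ) (hφ : Integrable φ) :
    Filter.Tendsto (fun δ : ℝ => ∫ z : ℂ, muDelta δ z * φ z)
      (nhdsWithin 0 (Set.Ioi 0)) (nhds 0) := by
  have htranslate : Tendsto (fun δ : ℝ => ∫ z, ‖φ (z + δ) - φ z‖) (𝓝[>] 0) (𝓝 0) :=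
    (Integrable.tendsto_integral_norm_sub_comp_add hφ).comp
      ((Complex.continuous_ofReal.tendsto' 0 0 Complex.ofReal_zero).mono_left nhdsWithin_le_nhds)
  refine squeeze_zero_norm' ?_ (by simpa using htranslate.const_mul (1 / 3 / 2))
  filter_upwards [self_mem_nhdsWithin] with δ hδ
  exact norm_integral_mul_le_of_antiperiodic (muDelta_antiperiodic (ne_of_gt hδ))
    (measurable_muDelta δ).aestronglyMeasurable (fun z => (norm_muDelta δ z).le) hφ

end
end
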